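/- Let A(t) := (β/(16γ)) ∑_{m=1}^∞ (γ^m/m²) t^m be a formal power series with real positive coefficients β, γ > 0. Then A(t)² ≪ (β/γ) A(t), i.e., each coefficient of A(t)² is at most the corresponding coefficient of (β/γ)A(t). -/

import Mathlib

/-!
For `i + j = m` with `i, j > 0` one has `1 / (i j)² = (1/i + 1/j)² / m² ≤ 2 (1/i² + 1/j²) / m²`;
summing over `i` and using `∑ 1/i² ≤ 2` gives `∑_{i+j=m} 1/(i j)² ≤ 8/m²`. Hence the coefficients
`a_m = c γ^m / m²` satisfy `∑_{i+j=m} a_i a_j ≤ 8 c a_m`, and `β/γ = 16 c` for `c = β/(16γ)`.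
-/

open Finset

lemma inv_mul_sq_le_of_pos {x y : ℝ} (hx : 0 < x) (hy : 0 < y) :
    ((x * y) ^ 2)⁻¹ ≤ 2 * ((x ^ 2)⁻¹ + (y ^ 2)⁻¹) / (x + y) ^ 2 := by
  have hsq : ((x * y) ^ 2)⁻¹ = (x⁻¹ + y⁻¹) ^ 2 / (x + y) ^ 2 := by
    field_simp
    ring
  rw [hsq]
  gcongr
  nlinarith [sq_nonneg (x⁻¹ - y⁻¹), inv_pow x 2, inv_pow y 2]

lemma sum_Ico_one_inv_sq_le_two (m : ℕ) : ∑ i ∈ Ico 1 m, ((i : ℝ) ^ 2)⁻¹ ≤ 2 := by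
  have h := sum_Ioo_inv_sq_le (α := ℝ) 0 m
  rwa [← Ico_add_one_left_eq_Ioo, zero_add, Nat.cast_zero, zero_add, div_one] at h

lemma sum_Ico_one_inv_sq_mul_sub_sq_le (m : ℕ) :
    ∑ i ∈ Ico 1 m, (((i : ℝ) * (m - i : ℕ)) ^ 2)⁻¹ ≤ 8 / (m : ℝ) ^ 2 := by
  have hreflect : ∑ i ∈ Ico 1 m, (((m - i : ℕ) : ℝ) ^ 2)⁻¹ = ∑ i ∈ Ico 1 m, ((i : ℝ) ^ 2)⁻¹ := by
    rw [sum_Ico_reflect (fun j => ((j : ℝ) ^ 2)⁻¹) 1 (Nat.le_succ m)]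
    simp
  calc ∑ i ∈ Ico 1 m, (((i : ℝ) * (m - i : ℕ)) ^ 2)⁻¹
      ≤ ∑ i ∈ Ico 1 m, 2 * (((i : ℝ) ^ 2)⁻¹ + (((m - i : ℕ) : ℝ) ^ 2)⁻¹) / (m : ℝ) ^ 2 := by
        refine sum_le_sum fun i hi => ?_
        obtain ⟨hi1, him⟩ := mem_Ico.mp hi
        have hm : ((i : ℝ) + (m - i : ℕ)) = m := by norm_cast; omega
        rw [← hm]
        exact inv_mul_sq_le_of_pos (by positivity) (Nat.cast_pos.mpr (by omega))
    _ = 4 * (∑ i ∈ Ico 1 m, ((i : ℝ) ^ 2)⁻¹) / (m : ℝ) ^ 2 := by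
        rw [← sum_div, ← mul_sum, sum_add_distrib, hreflect]
        ring
    _ ≤ 8 / (m : ℝ) ^ 2 := by
        gcongr
        linarith [sum_Ico_one_inv_sq_le_two m]

noncomputable def majorantCoeff (c γ : ℝ) (n : ℕ) : ℝ :=
  if n = 0 then 0 else c * γ ^ n / (n : ℝ) ^ 2

lemma majorantCoeff_mul_majorantCoeff (c γ : ℝ) {i j : ℕ} (hi : i ≠ 0) (hj : j ≠ 0) :
    majorantCoeff c γ i * majorantCoeff c γ j = c ^ 2 * γ ^ (i + j) * (((i : ℝ) * j) ^ 2)⁻¹ := by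
  simp only [majorantCoeff, if_neg hi, if_neg hj]
  ring

lemma sum_majorantCoeff_mul_le (c : ℝ) {γ : ℝ} (hγ : 0 ≤ γ) (m : ℕ) :
    ∑ i ∈ range (m + 1), majorantCoeff c γ i * majorantCoeff c γ (m - i) ≤
      8 * c * majorantCoeff c γ m := by
  rcases Nat.eq_zero_or_pos m with rfl | hm
  · simp [majorantCoeff]
  have hsupport : ∑ i ∈ Ico 1 m, majorantCoeff c γ i * majorantCoeff c γ (m - i) =
      ∑ i ∈ range (m + 1), majorantCoeff c γ i * majorantCoeff c γ (m - i) := by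
    refine sum_subset (fun i hi => by simp only [mem_Ico, mem_range] at hi ⊢; omega) fun i hi hni => ?_
    simp only [mem_range, mem_Ico, not_and_or, not_le, not_lt] at hi hni
    rcases hni with h | h
    · simp [majorantCoeff, show i = 0 by omega]
    · simp [majorantCoeff, show m - i = 0 by omega]
  rw [← hsupport]
  calc ∑ i ∈ Ico 1 m, majorantCoeff c γ i * majorantCoeff c γ (m - i)
      = c ^ 2 * γ ^ m * ∑ i ∈ Ico 1 m, (((i : ℝ) * (m - i : ℕ)) ^ 2)⁻¹ := by
        rw [mul_sum]
        refine sum_congr rfl fun i hi => ?_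
        obtain ⟨hi1, him⟩ := mem_Ico.mp hi
        rw [majorantCoeff_mul_majorantCoeff c γ (by omega) (by omega), Nat.add_sub_cancel' him.le]
    _ ≤ c ^ 2 * γ ^ m * (8 / (m : ℝ) ^ 2) := by
        gcongr
        exact sum_Ico_one_inv_sq_mul_sub_sq_le m
    _ = 8 * c * majorantCoeff c γ m := by
        rw [majorantCoeff, if_neg hm.ne']
        ring

theorem stmt14_general (β γ : ℝ) (hγ : 0 < γ) (m : ℕ) :
    ∑ i ∈ Finset.range (m + 1),
        (if i = 0 then 0 else β / (16 * γ) * γ ^ i / (i : ℝ) ^ 2) *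
        (if m - i = 0 then 0 else β / (16 * γ) * γ ^ (m - i) / ((m - i : ℕ) : ℝ) ^ 2) ≤
      (β / γ) * (if m = 0 then 0 else β / (16 * γ) * γ ^ m / (m : ℝ) ^ 2) := by
  set c := β / (16 * γ)
  have hβγ : β / γ = 16 * c := by
    simp only [c]
    field_simp
  have hcoeff : 0 ≤ c * majorantCoeff c γ m := by
    unfold majorantCoeff
    split_ifs
    · simp
    · rw [← mul_div_assoc, ← mul_assoc, ← sq]
      positivity
  calc _ ≤ 8 * c * majorantCoeff c γ m := sum_majorantCoeff_mul_le c hγ.le m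
    _ ≤ β / γ * majorantCoeff c γ m := by
        rw [hβγ]
        linarith

/-- For `A(t) = (β/16γ) ∑_{m≥1} (γ^m/m²) t^m`, one has `A(t)² ≪ (β/γ) A(t)`
coefficientwise. -/
theorem stmt14 (β γ : ℝ) (hβ : 0 < β) (hγ : 0 < γ) (m : ℕ) :
    ∑ i ∈ Finset.range (m + 1),
        (if i = 0 then 0 else β / (16 * γ) * γ ^ i / (i : ℝ) ^ 2) *
        (if m - i = 0 then 0 else β / (16 * γ) * γ ^ (m - i) / ((m - i : ℕ) : ℝ) ^ 2) ≤
      (β / γ) * (if m = 0 then 0 else β / (16 * γ) * γ ^ m / (m : ℝ) ^ 2) :=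
  stmt14_general β γ hγ m
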